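/- For every k ∈ ℕ, single-buffer simulation with capacity k is strictly contained in single-buffer simulation with capacity k+1: ⊑k ⊊ ⊑(k+1). -/

import Mathlib

open scoped Classical

/-- A Büchi automaton over alphabet `S`. -/
structure BA (S : Type) where
  Q : Type
  init : Q
  trans : Q → S → Q → Prop
  acc : Q → Prop

/-- The Büchi language of `A`: infinite words with a run from the initial state
visiting accepting states infinitely often. -/
def BA.Lang {S : Type} (A : BA S) : Set (ℕ → S) :=
  { w | ∃ ρ : ℕ → A.Q, ρ 0 = A.init ∧ (∀ n, A.trans (ρ n) (w n) (ρ (n+1))) ∧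
        ∀ n, ∃ m, n ≤ m ∧ A.acc (ρ m) }

/-- Single-buffer game: the configuration after Spoiler's move `(a, q')`:
 `a` is appended to the buffer. -/
def midCfg1 {S : Type} {QA QB : Type} (c : QA × List S × QB) (m : S × QA) :
    QA × List S × QB :=
  (m.2, c.2.1 ++ [m.1], c.2.2)

/-- Duplicator's move in the single-buffer game: skip (`none`) or consume the oldest
buffered letter along a matching transition to state `p'` (`some p'`). -/
noncomputable def dupApply1 {S : Type} (A B : BA S) :
    (A.Q × List S × B.Q) → Option B.Q → Option (A.Q × List S × B.Q)
  | c, none => some c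
  | c, some p' =>
    match c.2.1 with
    | [] => none
    | b :: γ => if B.trans c.2.2 b p' then some (c.1, γ, p') else none

/-- The configuration at the start of round `n` of the single-buffer game. -/
noncomputable def playCfg1 {S : Type} (A B : BA S)
    (sp : ℕ → S × A.Q) (dm : ℕ → Option B.Q) : ℕ → Option (A.Q × List S × B.Q)
  | 0 => some (A.init, [], B.init)
  | n+1 =>
    match playCfg1 A B sp dm n with
    | none => none
    | some c =>
      if A.trans c.1 (sp n).1 (sp n).2 then dupApply1 A B (midCfg1 c (sp n)) (dm n) else none

/-- Duplicator's winning condition for the single-buffer game with capacity `k`: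
the buffer never exceeds `k` (checked after her moves), and either Spoiler's run is
non-accepting, or Duplicator moves infinitely often and her run visits accepting
states infinitely often. -/
def Win1 {S : Type} (A B : BA S) (k : ℕ∞)
    (sp : ℕ → S × A.Q) (dm : ℕ → Option B.Q) : Prop :=
  (∀ n c, playCfg1 A B sp dm n = some c → (c.2.1.length : ℕ∞) ≤ k) ∧
  ((∃ N, ∀ n, N ≤ n → ¬ A.acc (sp n).2) ∨
    ((∀ n, ∃ m, n ≤ m ∧ dm m ≠ none) ∧ (∀ n, ∃ m, n ≤ m ∧ ∃ p ∈ dm m, B.acc p)))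

/-- Single-buffer simulation `A ⊑k B`: Duplicator has a winning strategy in the
single-buffer simulation game with buffer capacity `k` (`k = ⊤` is the unbounded
buffer). -/
def Sim1 {S : Type} (A B : BA S) (k : ℕ∞) : Prop :=
  ∃ dstrat : List ((S × A.Q) × Option B.Q) → (S × A.Q) → Option B.Q,
    ∀ sp dm, (∀ n, dm n = dstrat (List.ofFn fun i : Fin n => (sp i, dm i)) (sp n)) →
      (∀ n c, playCfg1 A B sp dm n = some c → A.trans c.1 (sp n).1 (sp n).2) →
      (∀ n, (playCfg1 A B sp dm n).isSome) ∧ Win1 A B k sp dm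

/-!
The automaton `lookaheadBA k` accepts every word, but on reading the first letter it must
guess the letter at position `k + 1`. With capacity `k + 1` Duplicator can hold back until
Spoiler has played that letter and then guess right. With capacity `k` she has to move by
round `k`. Up to that round her strategy has only seen letters at positions `≤ k`. So
Spoiler can play `0`s and put at position `k + 1` a letter that none of her early moves
guesses. After that her run can consume at most `k + 1` letters, and the buffer overflows.
-/

def moveCount {β : Type*} (dm : ℕ → Option β) : ℕ → ℕ
  | 0 => 0
  | n + 1 => moveCount dm n + if (dm n).isSome then 1 else 0

def dupState {β : Type*} (q₀ : β) (dm : ℕ → Option β) : ℕ → β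
  | 0 => q₀
  | n + 1 => (dm n).getD (dupState q₀ dm n)

def letters {S α : Type*} (sp : ℕ → S × α) (n : ℕ) : List S :=
  (List.range n).map fun i => (sp i).1

lemma moveCount_le {β : Type*} (dm : ℕ → Option β) (n : ℕ) : moveCount dm n ≤ n := by
  induction n with
  | zero => rfl
  | succ n ih => simp only [moveCount]; split_ifs <;> omega

lemma letters_succ {S α : Type*} (sp : ℕ → S × α) (n : ℕ) :
    letters sp (n + 1) = letters sp n ++ [(sp n).1] := by
  simp [letters, List.range_succ]

lemma length_letters {S α : Type*} (sp : ℕ → S × α) (n : ℕ) :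
    (letters sp n).length = n := by
  simp [letters]

section Game

variable {S : Type} (A B : BA S)

lemma dupApply1_some_eq_some {c c' : A.Q × List S × B.Q} {p : B.Q} :
    dupApply1 A B c (some p) = some c' ↔
      ∃ b γ, c.2.1 = b :: γ ∧ B.trans c.2.2 b p ∧ c' = (c.1, γ, p) := by
  obtain ⟨a, _ | ⟨b, γ⟩, q⟩ := c
  · simp [dupApply1]
  · simp only [dupApply1]
    split_ifs <;> simp_all [eq_comm]

variable {A B} {sp : ℕ → S × A.Q} {dm : ℕ → Option B.Q}

lemma playCfg1_succ_eq_some {n : ℕ} {c' : A.Q × List S × B.Q} :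
    playCfg1 A B sp dm (n + 1) = some c' ↔ ∃ c, playCfg1 A B sp dm n = some c ∧
      A.trans c.1 (sp n).1 (sp n).2 ∧ dupApply1 A B (midCfg1 c (sp n)) (dm n) = some c' := by
  simp only [playCfg1]
  split <;> simp_all

lemma midCfg1_snd_eq {n : ℕ} {c : A.Q × List S × B.Q}
    (hc : c.2 = ((letters sp n).drop (moveCount dm n), dupState B.init dm n)) :
    (midCfg1 c (sp n)).2 = ((letters sp (n + 1)).drop (moveCount dm n), dupState B.init dm n) := by
  rw [letters_succ, List.drop_append_of_le_length
    (by rw [length_letters]; exact moveCount_le dm n)]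
  simp [midCfg1, hc]

lemma snd_eq_of_playCfg1_eq_some {n : ℕ} {c : A.Q × List S × B.Q}
    (h : playCfg1 A B sp dm n = some c) :
    c.2 = ((letters sp n).drop (moveCount dm n), dupState B.init dm n) := by
  induction n generalizing c with
  | zero =>
    obtain rfl := Option.some.inj h
    rfl
  | succ n ih =>
    obtain ⟨c₀, hc₀, -, hstep⟩ := playCfg1_succ_eq_some.1 h
    have hmid := midCfg1_snd_eq (ih hc₀)
    cases hd : dm n with
    | none =>
      rw [hd] at hstep
      obtain rfl : midCfg1 c₀ (sp n) = c := Option.some.inj hstep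
      simpa [moveCount, dupState, hd] using hmid
    | some p =>
      rw [hd] at hstep
      obtain ⟨b, γ, hcons, -, rfl⟩ := (dupApply1_some_eq_some A B).1 hstep
      have hbuf : (midCfg1 c₀ (sp n)).2.1 = (letters sp (n + 1)).drop (moveCount dm n) :=
        congrArg Prod.fst hmid
      have hγ : γ = (letters sp (n + 1)).drop (moveCount dm n + 1) := by
        rw [← List.tail_drop, ← hbuf, hcons, List.tail_cons]
      simp [moveCount, dupState, hd, hγ]

lemma length_buffer_of_playCfg1_eq_some {n : ℕ} {c : A.Q × List S × B.Q}
    (h : playCfg1 A B sp dm n = some c) : c.2.1.length = n - moveCount dm n := by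
  rw [(Prod.ext_iff.1 (snd_eq_of_playCfg1_eq_some h)).1, List.length_drop, length_letters]

/-- Duplicator's `j`-th move consumes Spoiler's `j`-th letter. -/
lemma playCfg1_succ_isSome_iff {n : ℕ} {c : A.Q × List S × B.Q}
    (h : playCfg1 A B sp dm n = some c) (hA : A.trans c.1 (sp n).1 (sp n).2) :
    (playCfg1 A B sp dm (n + 1)).isSome ↔
      ∀ p ∈ dm n, B.trans (dupState B.init dm n) (sp (moveCount dm n)).1 p := by
  have hj : moveCount dm n < (letters sp (n + 1)).length := by
    rw [length_letters]; exact Nat.lt_succ_of_le (moveCount_le dm n)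
  obtain ⟨hbuf, hq⟩ := Prod.ext_iff.1 (midCfg1_snd_eq (snd_eq_of_playCfg1_eq_some h))
  rw [List.drop_eq_getElem_cons hj] at hbuf
  simp only [playCfg1, h, if_pos hA]
  cases dm n with
  | none => simp [dupApply1]
  | some p => simp [hbuf, hq, dupApply1, letters]

lemma forall_playCfg1_isSome_iff
    (hA : ∀ n c, playCfg1 A B sp dm n = some c → A.trans c.1 (sp n).1 (sp n).2) :
    (∀ n, (playCfg1 A B sp dm n).isSome) ↔
      ∀ n, ∀ p ∈ dm n, B.trans (dupState B.init dm n) (sp (moveCount dm n)).1 p := by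
  refine ⟨fun h n => ?_, fun h n => ?_⟩
  · obtain ⟨c, hc⟩ := Option.isSome_iff_exists.1 (h n)
    exact (playCfg1_succ_isSome_iff hc (hA n c hc)).1 (h (n + 1))
  · induction n with
    | zero => rfl
    | succ n ih =>
      obtain ⟨c, hc⟩ := Option.isSome_iff_exists.1 ih
      exact (playCfg1_succ_isSome_iff hc (hA n c hc)).2 (h n)

end Game

lemma Sim1.mono {S : Type} {A B : BA S} {k k' : ℕ∞} (hk : k ≤ k') (h : Sim1 A B k) :
    Sim1 A B k' := by
  obtain ⟨dstrat, hwin⟩ := h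
  refine ⟨dstrat, fun sp dm hdm hA => ?_⟩
  obtain ⟨hsome, hlen, hacc⟩ := hwin sp dm hdm hA
  exact ⟨hsome, fun n c hc => (hlen n c hc).trans hk, hacc⟩

section Strategy

variable {α β : Type*} (dstrat : List (α × β) → α → β)

def stratHistory (sp : ℕ → α) : ℕ → List (α × β)
  | 0 => []
  | n + 1 => stratHistory sp n ++ [(sp n, dstrat (stratHistory sp n) (sp n))]

def stratMoves (sp : ℕ → α) (n : ℕ) : β := dstrat (stratHistory dstrat sp n) (sp n)

lemma stratHistory_eq (sp : ℕ → α) (n : ℕ) :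
    stratHistory dstrat sp n =
      List.ofFn fun i : Fin n => (sp i, stratMoves dstrat sp i) := by
  induction n with
  | zero => rfl
  | succ n ih =>
    simp only [stratHistory, List.ofFn_succ', List.concat_eq_append, Fin.val_castSucc,
      Fin.val_last, ← ih]
    rfl

lemma stratMoves_eq (sp : ℕ → α) (n : ℕ) :
    stratMoves dstrat sp n =
      dstrat (List.ofFn fun i : Fin n => (sp i, stratMoves dstrat sp i)) (sp n) := by
  rw [stratMoves, stratHistory_eq]

lemma stratMoves_congr {sp sp' : ℕ → α} {n : ℕ} (h : ∀ m ≤ n, sp m = sp' m) :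
    stratMoves dstrat sp n = stratMoves dstrat sp' n := by
  induction n using Nat.strong_induction_on with
  | _ n ih =>
    rw [stratMoves_eq, stratMoves_eq, h n le_rfl]
    congr 2
    funext i
    rw [h i (by omega), ih i i.2 fun m hm => h m (by omega)]

end Strategy

abbrev BA.univ (S : Type) : BA S := ⟨Unit, (), fun _ _ _ => True, fun _ => True⟩

/-- In state `some (g, j)` the automaton has read `j` letters and guessed, on reading the first
one, that the letter at position `k + 1` is `g`. -/
def lookaheadTrans (k : ℕ) : Option (ℕ × ℕ) → ℕ → Option (ℕ × ℕ) → Prop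
  | none, _, some (_, j') => j' = 1
  | some (g, j), b, some (g', j') => g' = g ∧ j' = j + 1 ∧ (j = k + 1 → b = g)
  | _, _, none => False

abbrev lookaheadBA (k : ℕ) : BA ℕ :=
  ⟨Option (ℕ × ℕ), none, lookaheadTrans k, fun _ => True⟩

lemma map_fst_ofFn_append {α β : Type*} (sp : ℕ → α) (dm : ℕ → β) (n : ℕ) :
    (List.ofFn fun i : Fin n => (sp i, dm i)).map Prod.fst ++ [sp n] =
      List.ofFn fun i : Fin (n + 1) => sp i := by
  rw [List.ofFn_succ', List.concat_eq_append, List.map_ofFn]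
  rfl

section Capacity

variable (k : ℕ)

def lookaheadStrategy (h : List ((ℕ × Unit) × Option (Option (ℕ × ℕ)))) (a : ℕ × Unit) :
    Option (Option (ℕ × ℕ)) :=
  if h.length ≤ k then none
  else some (some (((h.map Prod.fst ++ [a]).getD (k + 1) default).1, h.length - k))

variable {k} {sp : ℕ → ℕ × Unit} {dm : ℕ → Option (Option (ℕ × ℕ))}

lemma lookaheadStrategy_moves
    (hdm : ∀ n, dm n = lookaheadStrategy k (List.ofFn fun i : Fin n => (sp i, dm i)) (sp n))
    (n : ℕ) : dm n = if n ≤ k then none else some (some ((sp (k + 1)).1, n - k)) := by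
  rw [hdm, lookaheadStrategy, List.length_ofFn, map_fst_ofFn_append]
  split_ifs with hn
  · rfl
  · rw [List.getD_eq_getElem _ _ (by simp; omega), List.getElem_ofFn]

lemma moveCount_of_lookaheadStrategy
    (hdm : ∀ n, dm n = lookaheadStrategy k (List.ofFn fun i : Fin n => (sp i, dm i)) (sp n))
    (n : ℕ) : moveCount dm n = n - (k + 1) := by
  induction n with
  | zero => exact (Nat.zero_sub _).symm
  | succ n ih =>
    rw [moveCount, ih, lookaheadStrategy_moves hdm]
    split_ifs <;> simp_all <;> omega

lemma dupState_of_lookaheadStrategy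
    (hdm : ∀ n, dm n = lookaheadStrategy k (List.ofFn fun i : Fin n => (sp i, dm i)) (sp n))
    (n : ℕ) : dupState none dm n =
      if n ≤ k + 1 then none else some ((sp (k + 1)).1, n - (k + 1)) := by
  induction n with
  | zero => rfl
  | succ n ih =>
    rw [dupState, ih, lookaheadStrategy_moves hdm]
    split_ifs <;> simp_all <;> omega

theorem sim1_lookaheadBA (k : ℕ) : Sim1 (BA.univ ℕ) (lookaheadBA k) ((k : ℕ∞) + 1) := by
  refine ⟨lookaheadStrategy k, fun sp dm hdm hA => ⟨?_, ?_, Or.inr ⟨?_, ?_⟩⟩⟩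
  · refine (forall_playCfg1_isSome_iff hA).2 fun n p hp => ?_
    rw [lookaheadStrategy_moves hdm] at hp
    split_ifs at hp with hn
    · exact absurd hp (Option.not_mem_none p)
    obtain rfl := Option.mem_some_iff.1 hp
    rw [dupState_of_lookaheadStrategy hdm, moveCount_of_lookaheadStrategy hdm]
    split_ifs with hn'
    · show n - k = 1
      omega
    · refine ⟨rfl, by omega, fun h => by rw [h]⟩
  · intro n c hc
    rw [length_buffer_of_playCfg1_eq_some hc, moveCount_of_lookaheadStrategy hdm]
    exact_mod_cast (by omega : n - (n - (k + 1)) ≤ k + 1)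
  all_goals
    refine fun n => ⟨n + k + 1, by omega, ?_⟩
    rw [lookaheadStrategy_moves hdm, if_neg (by omega)]
    simp

end Capacity

/-- A first guess that misses `w (k + 1)` keeps Duplicator from ever consuming that letter. -/
lemma moveCount_le_of_guess_ne {k : ℕ} {w : ℕ → ℕ}
    {dm : ℕ → Option (Option (ℕ × ℕ))}
    (hlegal : ∀ n, ∀ p ∈ dm n, lookaheadTrans k (dupState none dm n) (w (moveCount dm n)) p)
    (hlag : ∀ n, n - moveCount dm n ≤ k)
    (hguess : ∀ m ≤ k, ∀ g j, dm m = some (some (g, j)) → g ≠ w (k + 1)) (n : ℕ) :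
    moveCount dm n ≤ k + 1 := by
  suffices h : ∀ n, (dupState none dm n = none ∧ moveCount dm n = 0) ∨
      ∃ g, dupState none dm n = some (g, moveCount dm n) ∧ moveCount dm n ≤ k + 1 ∧
        g ≠ w (k + 1) by
    rcases h n with ⟨-, h0⟩ | ⟨g, -, hle, -⟩ <;> omega
  intro n
  induction n with
  | zero => exact Or.inl ⟨rfl, rfl⟩
  | succ n ih =>
    cases hd : dm n with
    | none => simpa [dupState, moveCount, hd] using ih
    | some p =>
      have hl := hlegal n p (by simp [hd])
      rcases ih with ⟨hs, h0⟩ | ⟨g, hs, hle, hg⟩ <;> rw [hs] at hl <;>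
        obtain _ | ⟨g', j'⟩ := p <;> simp only [lookaheadTrans] at hl
      · subst hl
        refine Or.inr ⟨g', by simp [dupState, moveCount, hd, h0], by simp [moveCount, hd, h0],
          hguess n (by have := hlag n; omega) g' 1 hd⟩
      · obtain ⟨rfl, rfl, hk⟩ := hl
        have hj : moveCount dm n ≠ k + 1 := fun h => hg (by rw [← h, hk h])
        exact Or.inr ⟨g', by simp [dupState, moveCount, hd], by simp [moveCount, hd]; omega, hg⟩

theorem not_sim1_lookaheadBA (k : ℕ) : ¬ Sim1 (BA.univ ℕ) (lookaheadBA k) k := by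
  rintro ⟨dstrat, hwin⟩
  let guess : Option (Option (ℕ × ℕ)) → ℕ := fun o => (o.join.map Prod.fst).getD 0
  obtain ⟨bad, hbad⟩ := Infinite.exists_notMem_finset
    ((Finset.range (k + 1)).image fun m => guess (stratMoves dstrat (fun _ => (0, ())) m))
  let sp : ℕ → ℕ × Unit := fun n => (if n = k + 1 then bad else 0, ())
  let dm := stratMoves dstrat sp
  obtain ⟨hsome, hlen, -⟩ := hwin sp dm (stratMoves_eq dstrat sp) fun _ _ _ => trivial
  have hlegal := (forall_playCfg1_isSome_iff fun _ _ _ => trivial).1 hsome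
  have hlag : ∀ n, n - moveCount dm n ≤ k := fun n => by
    obtain ⟨c, hc⟩ := Option.isSome_iff_exists.1 (hsome n)
    have := hlen n c hc
    rw [length_buffer_of_playCfg1_eq_some hc] at this
    exact_mod_cast this
  have hguess : ∀ m ≤ k, ∀ g j, dm m = some (some (g, j)) → g ≠ (sp (k + 1)).1 := by
    intro m hm g j hg hbad'
    have hdm : dm m = stratMoves dstrat (fun _ => (0, ())) m :=
      stratMoves_congr dstrat fun i hi => by simp only [sp, if_neg (by omega : i ≠ k + 1)]
    rw [hdm] at hg
    exact hbad (Finset.mem_image.2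
      ⟨m, Finset.mem_range.2 (by omega), by simp [guess, hg, hbad', sp]⟩)
  have h1 := moveCount_le_of_guess_ne (w := fun i => (sp i).1) hlegal hlag hguess (2 * k + 2)
  have h2 := hlag (2 * k + 2)
  omega

theorem sim1_strict_hierarchy (k : ℕ) :
    (∀ (S : Type) (A B : BA S), Sim1 A B (k : ℕ∞) → Sim1 A B ((k : ℕ∞) + 1)) ∧
    (∃ (S : Type) (A B : BA S), Sim1 A B ((k : ℕ∞) + 1) ∧ ¬ Sim1 A B (k : ℕ∞)) :=
  ⟨fun _ _ _ => Sim1.mono le_self_add,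
    ℕ, BA.univ ℕ, lookaheadBA k, sim1_lookaheadBA k, not_sim1_lookaheadBA k⟩
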